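/- Let λ_1 < ⋯ < λ_N be the eigenvalues of an N×N Jacobi matrix J with nonzero off-diagonals, and ψ_1,...,ψ_N orthonormal eigenvectors. For 1 ≤ n ≤ N-2 and β ∈ {λ_1,...,λ_N}: either ψ_{k}(n) ≠ 0 for the eigenvector ψ_k corresponding to β (in which case β is a pole of G(·,n,n) = Σ_l |ψ_l(n)|²/(λ_l - ·)), or ψ_k(n) = 0, in which case β is a common eigenvalue of J_{[0,n-1]} and J_{[n+1,N-1]} and G(β,n,n) = 0 (the limit of G at β exists and equals 0). -/

import Mathlib

open Matrix BigOperators Filter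

/-- The `N × N` Jacobi matrix with diagonal `a` and off-diagonals `b`. -/
def jacobi (N : ℕ) (a b : ℕ → ℝ) : Matrix (Fin N) (Fin N) ℝ :=
  Matrix.of fun i j =>
    if (i : ℕ) = (j : ℕ) then a i
    else if (i : ℕ) + 1 = (j : ℕ) then b i
    else if (j : ℕ) + 1 = (i : ℕ) then b j
    else 0

/-- `μ` is an eigenvalue of the real matrix `M`. -/
def isEig {m : ℕ} (M : Matrix (Fin m) (Fin m) ℝ) (μ : ℝ) : Prop :=
  ∃ v : Fin m → ℝ, v ≠ 0 ∧ M.mulVec v = μ • v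

/-!
Write `G(x) = ∑ₗ ψₗ(n)² / (λₗ - x)`. If `ψₖ(n) ≠ 0`, the residue of `G` at `λₖ` is at least
`ψₖ(n)² > 0`, so `|G|` blows up there.

If `ψₖ(n) = 0`, the three-term recurrence `J ψₖ = λₖ ψₖ` with `b ≠ 0` forbids two consecutive
zeros, so `ψₖ(n - 1) ≠ 0 ≠ ψₖ(n + 1)`, and the pieces of `ψₖ` on either side of `n` are
eigenvectors of the two truncations. The left piece `φ` (extended by zero) satisfies
`(J - λₖ) φ = c δₙ` with `c = bₙ₋₁ ψₖ(n - 1) ≠ 0`; pairing with `ψₗ` gives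
`(λₗ - λₖ) ⟨ψₗ, φ⟩ = c ψₗ(n)`, so every `λₗ = λₖ` has `ψₗ(n) = 0`, `G` is continuous at `λₖ`, and
by completeness of the `ψₗ`, `G(λₖ) = φ(n) / c = 0`.
-/

open Finset Topology

section PartialFractions

variable {ι : Type*} (c lam : ι → ℝ) {μ : ℝ}

theorem continuousAt_sum_div_sub (s : Finset ι) (h : ∀ l ∈ s, lam l = μ → c l = 0) :
    ContinuousAt (fun x => ∑ l ∈ s, c l / (lam l - x)) μ := by
  refine tendsto_finsetSum s fun l hl => ?_
  by_cases hlμ : lam l = μ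
  · simp only [h l hl hlμ, zero_div]
    exact tendsto_const_nhds
  · exact continuousAt_const.div (continuousAt_const.sub continuousAt_id) (sub_ne_zero.2 hlμ)

theorem tendsto_abs_sum_div_sub_atTop [Fintype ι]
    (hres : ∑ l ∈ univ.filter (lam · = μ), c l ≠ 0) :
    Tendsto (fun x => |∑ l, c l / (lam l - x)|) (𝓝[≠] μ) atTop := by
  set C := ∑ l ∈ univ.filter (lam · = μ), c l
  set R := fun x => ∑ l ∈ univ.filter (lam · ≠ μ), c l / (lam l - x)
  have hsplit : ∀ x, ∑ l, c l / (lam l - x) = C / (μ - x) + R x := fun x => by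
    rw [← sum_filter_add_sum_filter_not univ (lam · = μ), sum_div]
    exact congrArg (· + R x) (sum_congr rfl fun l hl => by rw [(mem_filter.1 hl).2])
  have hR : ContinuousAt R μ :=
    continuousAt_sum_div_sub c lam _ fun l hl hlμ => absurd hlμ (mem_filter.1 hl).2
  have hshift : Tendsto (· - μ) (𝓝[≠] μ) (𝓝[≠] 0) := by
    simpa using ((hasDerivAt_id μ).sub_const μ).tendsto_nhdsNE one_ne_zero
  have hpole : Tendsto (fun x => |C| * ‖(x - μ)⁻¹‖) (𝓝[≠] μ) atTop :=
    (tendsto_norm_inv_nhdsNE_zero_atTop.comp hshift).const_mul_atTop (abs_pos.2 hres)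
  refine tendsto_atTop_mono (fun x => ?_)
    (hpole.atTop_add (hR.tendsto.mono_left nhdsWithin_le_nhds).abs.neg)
  have : |C| * ‖(x - μ)⁻¹‖ = |C / (μ - x)| := by
    rw [Real.norm_eq_abs, ← abs_mul, ← abs_neg, ← neg_mul, neg_mul_comm, neg_inv, neg_sub,
      div_eq_mul_inv]
  rw [hsplit, this, ← sub_eq_add_neg]
  exact abs_sub_abs_le_abs_add _ _

end PartialFractions

section Spectral

variable {ι : Type*} [Fintype ι] [DecidableEq ι]

theorem sub_mul_dotProduct_eq_of_mulVec_eq_add_single {J : Matrix ι ι ℝ} (hJ : J.IsSymm)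
    {ψ φ : ι → ℝ} {lam μ c : ℝ} {n : ι} (hψ : J *ᵥ ψ = lam • ψ)
    (hφ : J *ᵥ φ = μ • φ + Pi.single n c) :
    (lam - μ) * (ψ ⬝ᵥ φ) = c * ψ n := by
  have h := dotProduct_mulVec ψ J φ
  rw [← mulVec_transpose, hJ.eq, hψ, hφ, dotProduct_add, dotProduct_single, dotProduct_smul,
    smul_dotProduct, smul_eq_mul, smul_eq_mul] at h
  linear_combination -h

theorem sum_mul_dotProduct_of_orthonormal {ψ : ι → ι → ℝ}
    (horth : ∀ k l, ψ k ⬝ᵥ ψ l = if k = l then 1 else 0) (φ : ι → ℝ) (i : ι) :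
    ∑ l, ψ l i * (ψ l ⬝ᵥ φ) = φ i := by
  have hU : of ψ * (of ψ)ᵀ = 1 := by
    ext k l
    simpa [mul_apply, one_apply, dotProduct] using horth k l
  calc ∑ l, ψ l i * (ψ l ⬝ᵥ φ) = (((of ψ)ᵀ * of ψ) *ᵥ φ) i := by
        rw [← mulVec_mulVec]; simp [mulVec, dotProduct, mul_sum]
    _ = φ i := by rw [mul_eq_one_comm.1 hU, one_mulVec]

theorem tendsto_sum_sq_div_sub_of_mulVec_eq_add_single {ψ : ι → ι → ℝ}
    (horth : ∀ k l, ψ k ⬝ᵥ ψ l = if k = l then 1 else 0) {lam : ι → ℝ} {μ c : ℝ} (hc : c ≠ 0)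
    {φ : ι → ℝ} {n : ι} (hφ : ∀ l, (lam l - μ) * (ψ l ⬝ᵥ φ) = c * ψ l n) :
    Tendsto (fun x => ∑ l, ψ l n ^ 2 / (lam l - x)) (𝓝 μ) (𝓝 (φ n / c)) := by
  have hvanish : ∀ l, lam l = μ → ψ l n = 0 := fun l hl => by
    simpa [hl, hc] using (hφ l).symm
  have hval : ∑ l, ψ l n ^ 2 / (lam l - μ) = φ n / c := by
    rw [eq_div_iff hc, sum_mul, ← sum_mul_dotProduct_of_orthonormal horth φ n]
    refine sum_congr rfl fun l _ => ?_
    by_cases hl : lam l = μ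
    · simp [hvanish l hl]
    · rw [div_mul_eq_mul_div, div_eq_iff (sub_ne_zero.2 hl)]
      linear_combination -(ψ l n) * hφ l
  rw [← hval]
  exact (continuousAt_sum_div_sub (μ := μ) (fun l => ψ l n ^ 2) lam univ
    fun l _ hl => by simp [hvanish l hl]).tendsto

end Spectral

section Jacobi

variable {N : ℕ}

noncomputable def zeroExtend (v : Fin N → ℝ) (i : ℕ) : ℝ :=
  if h : i < N then v ⟨i, h⟩ else 0

theorem zeroExtend_of_lt (v : Fin N → ℝ) {i : ℕ} (h : i < N) : zeroExtend v i = v ⟨i, h⟩ :=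
  dif_pos h

theorem zeroExtend_of_le (v : Fin N → ℝ) {i : ℕ} (h : N ≤ i) : zeroExtend v i = 0 :=
  dif_neg h.not_gt

@[simp]
theorem zeroExtend_val (v : Fin N → ℝ) (i : Fin N) : zeroExtend v i = v i :=
  zeroExtend_of_lt v i.2

theorem sum_ite_val_eq_mul (c : ℝ) (v : Fin N → ℝ) (m : ℕ) :
    ∑ j : Fin N, (if (j : ℕ) = m then c * v j else 0) = c * zeroExtend v m := by
  by_cases hm : m < N
  · have hm' : ∀ j : Fin N, ((j : ℕ) = m) = (j = ⟨m, hm⟩) := fun j => by rw [Fin.ext_iff]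
    simp only [hm', sum_ite_eq', mem_univ, if_true, zeroExtend_of_lt v hm]
  · rw [zeroExtend_of_le v (not_lt.1 hm), mul_zero]
    exact sum_eq_zero fun j _ => if_neg (by omega)

variable (a b : ℕ → ℝ)

theorem jacobi_isSymm : (jacobi N a b).IsSymm := by
  ext i j
  simp only [transpose_apply, jacobi, of_apply]
  split_ifs <;> first | rfl | omega | simp_all

theorem jacobi_mulVec_apply (v : Fin N → ℝ) (i : Fin N) :
    (jacobi N a b *ᵥ v) i = (if 0 < (i : ℕ) then b (i - 1) * zeroExtend v (i - 1) else 0)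
      + a i * v i + b i * zeroExtend v (i + 1) := by
  have hentry : ∀ j : Fin N, jacobi N a b i j * v j =
      (if (j : ℕ) = i then a i * v j else 0) + (if (j : ℕ) = i + 1 then b i * v j else 0)
        + (if 0 < (i : ℕ) then (if (j : ℕ) = i - 1 then b (i - 1) * v j else 0) else 0) := by
    intro j
    simp only [jacobi, of_apply]
    split_ifs <;> first | omega | (rw [show (i : ℕ) - 1 = j by omega]; simp) | simp
  simp only [mulVec, dotProduct, hentry, sum_add_distrib, sum_ite_val_eq_mul, zeroExtend_val]
  split_ifs <;> simp only [sum_ite_val_eq_mul, sum_const_zero] <;> ring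

variable {a b} {μ : ℝ} {v : Fin N → ℝ}

theorem jacobi_recurrence (hv : jacobi N a b *ᵥ v = μ • v) {i : ℕ} (hi : i < N) :
    (if 0 < i then b (i - 1) * zeroExtend v (i - 1) else 0) + a i * zeroExtend v i
      + b i * zeroExtend v (i + 1) = μ * zeroExtend v i := by
  simpa [jacobi_mulVec_apply, zeroExtend_of_lt v hi] using congrFun hv ⟨i, hi⟩

theorem zeroExtend_add_two_eq_zero (hb : ∀ i, b i ≠ 0) (hv : jacobi N a b *ᵥ v = μ • v)
    {j : ℕ} (h₀ : zeroExtend v j = 0) (h₁ : zeroExtend v (j + 1) = 0) :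
    zeroExtend v (j + 2) = 0 := by
  by_cases hj : j + 1 < N
  · have h := jacobi_recurrence hv hj
    simp only [h₀, h₁, add_tsub_cancel_right, mul_zero, ite_self, zero_add] at h
    exact (mul_eq_zero.1 h).resolve_left (hb _)
  · exact zeroExtend_of_le v (by omega)

theorem zeroExtend_eq_zero_of_succ (hb : ∀ i, b i ≠ 0) (hv : jacobi N a b *ᵥ v = μ • v)
    {j : ℕ} (hj : j + 1 < N) (h₁ : zeroExtend v (j + 1) = 0) (h₂ : zeroExtend v (j + 2) = 0) :
    zeroExtend v j = 0 := by
  have h := jacobi_recurrence hv hj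
  simp only [h₁, h₂, Nat.succ_pos, if_true, add_tsub_cancel_right, mul_zero, add_zero] at h
  exact (mul_eq_zero.1 h).resolve_left (hb _)

theorem eq_zero_of_zeroExtend_eq_zero (hb : ∀ i, b i ≠ 0) (hv : jacobi N a b *ᵥ v = μ • v)
    {j : ℕ} (hj : j + 1 < N) (h₀ : zeroExtend v j = 0) (h₁ : zeroExtend v (j + 1) = 0) :
    v = 0 := by
  have hstart : zeroExtend v 0 = 0 ∧ zeroExtend v 1 = 0 := by
    induction j with
    | zero => exact ⟨h₀, h₁⟩
    | succ j ih => exact ih (by omega) (zeroExtend_eq_zero_of_succ hb hv (by omega) h₀ h₁) h₀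
  have hall : ∀ m, zeroExtend v m = 0 ∧ zeroExtend v (m + 1) = 0 := by
    intro m
    induction m with
    | zero => exact hstart
    | succ m ih => exact ⟨ih.2, zeroExtend_add_two_eq_zero hb hv ih.1 ih.2⟩
  funext i
  simpa using (hall i).1

theorem jacobi_mulVec_window (hv : jacobi N a b *ᵥ v = μ • v) {p m : ℕ} (hpm : p + m ≤ N)
    (hleft : 0 < p → zeroExtend v (p - 1) = 0) (hright : zeroExtend v (p + m) = 0) :
    jacobi m (fun i => a (p + i)) (fun i => b (p + i)) *ᵥ (fun i : Fin m => zeroExtend v (p + i))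
      = μ • fun i : Fin m => zeroExtend v (p + i) := by
  set w : Fin m → ℝ := fun i => zeroExtend v (p + i)
  have hw : ∀ j ≤ m, zeroExtend w j = zeroExtend v (p + j) := fun j hj => by
    rcases hj.lt_or_eq with hj | rfl
    · exact zeroExtend_of_lt w hj
    · rw [zeroExtend_of_le w le_rfl, hright]
  funext i
  have h := jacobi_recurrence hv (i := p + i) (by omega)
  rw [jacobi_mulVec_apply, hw _ i.2, Pi.smul_apply, smul_eq_mul, ← h]
  congr 2
  by_cases hi : 0 < (i : ℕ)
  · rw [if_pos hi, if_pos (by omega), hw _ (by omega), show p + (↑i - 1) = p + ↑i - 1 by omega]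
  · rw [if_neg hi, show (i : ℕ) = 0 by omega, add_zero]
    split_ifs with hp
    · rw [hleft hp, mul_zero]
    · rfl

theorem jacobi_mulVec_truncate (hv : jacobi N a b *ᵥ v = μ • v) {n : ℕ} (hn₀ : 0 < n)
    (hn : n < N) (hvn : zeroExtend v n = 0) :
    jacobi N a b *ᵥ (fun i : Fin N => if (i : ℕ) < n then v i else 0)
      = μ • (fun i : Fin N => if (i : ℕ) < n then v i else 0)
        + Pi.single (⟨n, hn⟩ : Fin N) (b (n - 1) * zeroExtend v (n - 1)) := by
  set φ : Fin N → ℝ := fun i => if (i : ℕ) < n then v i else 0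
  have hφ : ∀ j, zeroExtend φ j = if j < n then zeroExtend v j else 0 := fun j => by
    by_cases hj : j < N
    · simp [zeroExtend_of_lt _ hj, φ]
    · simp [zeroExtend_of_le _ (not_lt.1 hj), show ¬ j < n by omega]
  funext i
  have h := jacobi_recurrence hv i.2
  simp only [jacobi_mulVec_apply, hφ, Pi.add_apply, Pi.smul_apply, smul_eq_mul, Pi.single_apply,
    Fin.ext_iff, zeroExtend_val, φ] at h ⊢
  rcases lt_trichotomy (i : ℕ) n with hi | rfl | hi
  · have hnext : zeroExtend v (i + 1) = if (i : ℕ) + 1 < n then zeroExtend v (i + 1) else 0 := by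
      split_ifs with h'
      · rfl
      · rw [show (i : ℕ) + 1 = n by omega, hvn]
    rw [← hnext]
    split_ifs at h ⊢ <;> first | omega | linarith
  · split_ifs <;> first | omega | ring
  · split_ifs <;> first | omega | ring

end Jacobi

/-- Dichotomy at an eigenvalue `β = λ_k` of a Jacobi matrix, for an interior index
`1 ≤ n ≤ N-2`: either `ψ_k(n) ≠ 0` and `β` is a pole of
`G(·,n,n) = Σ_l ψ_l(n)²/(λ_l - ·)`, or `ψ_k(n) = 0`, in which case `β` is a common
eigenvalue of `J_{[0,n-1]}` and `J_{[n+1,N-1]}` and `G(·,n,n) → 0` at `β`. -/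
theorem stmt_19 (N n : ℕ) (hn1 : 1 ≤ n) (hn2 : n + 2 ≤ N)
    (a b : ℕ → ℝ) (hb : ∀ i, b i ≠ 0)
    (lam : Fin N → ℝ)
    (ψ : Fin N → Fin N → ℝ)
    (horth : ∀ k l, ψ k ⬝ᵥ ψ l = if k = l then 1 else 0)
    (heig : ∀ k, (jacobi N a b).mulVec (ψ k) = lam k • ψ k)
    (k : Fin N) :
    (ψ k ⟨n, by omega⟩ ≠ 0 →
      Tendsto (fun x : ℝ => |∑ l, (ψ l ⟨n, by omega⟩) ^ 2 / (lam l - x)|)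
        (nhdsWithin (lam k) {lam k}ᶜ) atTop) ∧
    (ψ k ⟨n, by omega⟩ = 0 →
      isEig (jacobi n a b) (lam k) ∧
      isEig (jacobi (N - n - 1) (fun i => a (n + 1 + i)) (fun i => b (n + 1 + i))) (lam k) ∧
      Tendsto (fun x : ℝ => ∑ l, (ψ l ⟨n, by omega⟩) ^ 2 / (lam l - x))
        (nhdsWithin (lam k) {lam k}ᶜ) (nhds 0)) := by
  refine ⟨fun hne => ?_, fun hzero => ?_⟩
  · refine tendsto_abs_sum_div_sub_atTop _ lam (ne_of_gt ?_)
    exact sum_pos' (fun l _ => sq_nonneg _) ⟨k, by simp, by positivity⟩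
  have hψk : ψ k ≠ 0 := fun h => by simpa [h] using horth k k
  have hn : zeroExtend (ψ k) n = 0 := (zeroExtend_of_lt _ _).trans hzero
  have hprev : zeroExtend (ψ k) (n - 1) ≠ 0 := fun h => hψk <|
    eq_zero_of_zeroExtend_eq_zero hb (heig k) (by omega) h (by rwa [Nat.sub_add_cancel hn1])
  have hnext : zeroExtend (ψ k) (n + 1) ≠ 0 := fun h => hψk <|
    eq_zero_of_zeroExtend_eq_zero hb (heig k) (by omega) hn h
  refine ⟨⟨fun i => zeroExtend (ψ k) i, fun h => hprev ?_, ?_⟩,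
    ⟨fun i => zeroExtend (ψ k) (n + 1 + i), fun h => hnext ?_, ?_⟩, ?_⟩
  · simpa using congrFun h ⟨n - 1, by omega⟩
  · simpa using jacobi_mulVec_window (heig k) (p := 0) (m := n) (by omega) (by simp) (by simpa)
  · simpa using congrFun h ⟨0, by omega⟩
  · exact jacobi_mulVec_window (heig k) (by omega) (by simpa) (zeroExtend_of_le _ (by omega))
  · have hc : b (n - 1) * zeroExtend (ψ k) (n - 1) ≠ 0 := mul_ne_zero (hb _) hprev
    have hcomb := jacobi_mulVec_truncate (heig k) hn1 (by omega) hn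
    have hG := tendsto_sum_sq_div_sub_of_mulVec_eq_add_single horth hc fun l =>
      sub_mul_dotProduct_eq_of_mulVec_eq_add_single (jacobi_isSymm a b) (heig l) hcomb
    simpa using hG.mono_left nhdsWithin_le_nhds
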